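/- Let V ⊆ 𝒜 and let M=(S,R,L,s_0) and M'=(S',R',L',s_0') be initial structures. If (M,s_0) ↔_{𝒜∖V} (M',s_0'), then the characterizing formulas of the two initial K-structures on V are logically equivalent: F_V(M,s_0) ≡ F_V(M',s_0'). -/

import Mathlib

universe u

/-- A Kripke structure over a set of atoms: a finite nonempty set of states,
a serial transition relation, and a labeling function. -/
structure Kripke (Atom : Type u) where
  State : Type u
  stateFinite : Finite State
  stateNonempty : Nonempty State
  R : State → State → Prop
  serial : ∀ s, ∃ t, R s t
  L : State → Set Atom

instance {Atom : Type u} (M : Kripke Atom) : Finite M.State := M.stateFinite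

/-- A K-structure: a Kripke structure together with one of its states. -/
structure KStruct (Atom : Type u) where
  M : Kripke Atom
  s : M.State

/-- An initial structure: a Kripke structure with an initial state `s0`,
i.e. a state admitting a path visiting every state. -/
structure InitKripke (Atom : Type u) extends Kripke Atom where
  s0 : State
  initial : ∃ π : ℕ → State, π 0 = s0 ∧ (∀ n, R (π n) (π (n + 1))) ∧ ∀ t, ∃ n, π n = t

/-- The (initial) K-structure associated to an initial structure. -/
def InitKripke.toKS {Atom : Type u} (M : InitKripke Atom) : KStruct Atom :=
  ⟨M.toKripke, M.s0⟩

/-- The approximations `B_n^V` of `V`-bisimilarity on K-structures. -/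
def BRel {Atom : Type u} (V : Set Atom) : ℕ → KStruct Atom → KStruct Atom → Prop
  | 0 => fun K1 K2 => K1.M.L K1.s \ V = K2.M.L K2.s \ V
  | n + 1 => fun K1 K2 =>
      K1.M.L K1.s \ V = K2.M.L K2.s \ V ∧
      (∀ t1, K1.M.R K1.s t1 → ∃ t2, K2.M.R K2.s t2 ∧ BRel V n ⟨K1.M, t1⟩ ⟨K2.M, t2⟩) ∧
      (∀ t2, K2.M.R K2.s t2 → ∃ t1, K1.M.R K1.s t1 ∧ BRel V n ⟨K1.M, t1⟩ ⟨K2.M, t2⟩)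

/-- `V`-bisimilarity `K1 ↔_V K2` of K-structures. -/
def VBisim {Atom : Type u} (V : Set Atom) (K1 K2 : KStruct Atom) : Prop :=
  ∀ n, BRel V n K1 K2

/-- CTL formulas in existential normal form. -/
inductive CTL (Atom : Type u) : Type u
  | bot  : CTL Atom
  | top  : CTL Atom
  | atom (p : Atom) : CTL Atom
  | neg  (φ : CTL Atom) : CTL Atom
  | or   (φ ψ : CTL Atom) : CTL Atom
  | EX   (φ : CTL Atom) : CTL Atom
  | EG   (φ : CTL Atom) : CTL Atom
  | EU   (φ ψ : CTL Atom) : CTL Atom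

namespace CTL
variable {Atom : Type u}

def and (φ ψ : CTL Atom) : CTL Atom := .neg (.or (.neg φ) (.neg ψ))
def imp (φ ψ : CTL Atom) : CTL Atom := .or (.neg φ) ψ
def iff (φ ψ : CTL Atom) : CTL Atom := (φ.imp ψ).and (ψ.imp φ)
def AX (φ : CTL Atom) : CTL Atom := .neg (.EX (.neg φ))
def EF (φ : CTL Atom) : CTL Atom := .EU .top φ
def AF (φ : CTL Atom) : CTL Atom := .neg (.EG (.neg φ))
def AG (φ : CTL Atom) : CTL Atom := .neg (.EU .top (.neg φ))

/-- The set of atoms occurring in a formula. -/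
def vars : CTL Atom → Set Atom
  | .bot => ∅
  | .top => ∅
  | .atom p => {p}
  | .neg φ => vars φ
  | .or φ ψ => vars φ ∪ vars ψ
  | .EX φ => vars φ
  | .EG φ => vars φ
  | .EU φ ψ => vars φ ∪ vars ψ

end CTL

/-- The standard CTL satisfaction relation `(M,s) ⊨ φ`. -/
def Sat {Atom : Type u} (M : Kripke Atom) : CTL Atom → M.State → Prop
  | .bot => fun _ => False
  | .top => fun _ => True
  | .atom p => fun s => p ∈ M.L s
  | .neg φ => fun s => ¬ Sat M φ s
  | .or φ ψ => fun s => Sat M φ s ∨ Sat M ψ s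
  | .EX φ => fun s => ∃ t, M.R s t ∧ Sat M φ t
  | .EG φ => fun s => ∃ π : ℕ → M.State, π 0 = s ∧ (∀ n, M.R (π n) (π (n + 1))) ∧
      ∀ n, Sat M φ (π n)
  | .EU φ ψ => fun s => ∃ π : ℕ → M.State, π 0 = s ∧ (∀ n, M.R (π n) (π (n + 1))) ∧
      ∃ i, Sat M ψ (π i) ∧ ∀ j < i, Sat M φ (π j)

/-- Satisfaction for K-structures. -/
def KSat {Atom : Type u} (K : KStruct Atom) (φ : CTL Atom) : Prop := Sat K.M φ K.s

/-- The set of models (initial K-structures) of a formula. -/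
def CTLMod {Atom : Type u} (φ : CTL Atom) : Set (InitKripke Atom) :=
  {M | Sat M.toKripke φ M.s0}

def Entails {Atom : Type u} (φ ψ : CTL Atom) : Prop := CTLMod φ ⊆ CTLMod ψ

def CTLEquiv {Atom : Type u} (φ ψ : CTL Atom) : Prop := CTLMod φ = CTLMod ψ

/-- `IR φ V`: φ is irrelevant to the atoms in V. -/
def IR {Atom : Type u} (φ : CTL Atom) (V : Set Atom) : Prop :=
  ∃ ψ : CTL Atom, CTL.vars ψ ∩ V = ∅ ∧ CTLEquiv φ ψ

/-- `V`-bisimilarity of depth-`n` computation trees rooted at `s1` (in `M1`) and `s2` (in `M2`). -/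
def TreeBisim {Atom : Type u} (V : Set Atom) (M1 M2 : Kripke Atom) :
    ℕ → M1.State → M2.State → Prop
  | 0 => fun s1 s2 => M1.L s1 \ V = M2.L s2 \ V
  | n + 1 => fun s1 s2 =>
      M1.L s1 \ V = M2.L s2 \ V ∧
      (∀ t1, M1.R s1 t1 → ∃ t2, M2.R s2 t2 ∧ TreeBisim V M1 M2 n t1 t2) ∧
      (∀ t2, M2.R s2 t2 → ∃ t1, M1.R s1 t1 ∧ TreeBisim V M1 M2 n t1 t2)

/-- Finite conjunction of a list of formulas. -/
def andList {Atom : Type u} : List (CTL Atom) → CTL Atom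
  | [] => .top
  | φ :: l => φ.and (andList l)

/-- Finite disjunction of a list of formulas. -/
def orList {Atom : Type u} : List (CTL Atom) → CTL Atom
  | [] => .bot
  | φ :: l => .or φ (orList l)

/-- A list enumerating a subset of a finite type. -/
noncomputable def setToList {α : Type u} [Finite α] (s : Set α) : List α :=
  s.toFinite.toFinset.toList

/-- The list of `R`-successors of a state. -/
noncomputable def Kripke.succList {Atom : Type u} (M : Kripke Atom) (s : M.State) :
    List M.State :=
  setToList {t | M.R s t}

/-- The characterizing formula `F_V(Tr_0(s))` of the depth-0 computation tree. -/
noncomputable def charTree0 {Atom : Type u} [Finite Atom] (M : Kripke Atom) (V : Set Atom)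
    (s : M.State) : CTL Atom :=
  (andList ((setToList (V ∩ M.L s)).map CTL.atom)).and
    (andList ((setToList (V \ M.L s)).map fun q => CTL.neg (CTL.atom q)))

/-- The characterizing formula `F_V(Tr_n(s))` of the depth-`n` computation tree of `s`. -/
noncomputable def charTree {Atom : Type u} [Finite Atom] (M : Kripke Atom) (V : Set Atom) :
    ℕ → M.State → CTL Atom
  | 0 => fun s => charTree0 M V s
  | k + 1 => fun s =>
      (andList ((M.succList s).map fun t => CTL.EX (charTree M V k t))).and
        ((CTL.AX (orList ((M.succList s).map (charTree M V k)))).and (charTree0 M V s))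

/-- `dis_V(M,s,s',k)`: `s` and `s'` are `V`-distinguishable, and `k` is the least depth at which
their computation trees fail to be `(𝒜∖V)`-bisimilar. -/
def dis {Atom : Type u} (M : Kripke Atom) (V : Set Atom) (s s' : M.State) (k : ℕ) : Prop :=
  ¬ VBisim Vᶜ ⟨M, s⟩ ⟨M, s'⟩ ∧
  IsLeast {n | ¬ TreeBisim Vᶜ M M n s s'} k

/-- The characterization number `ch(M,V)`. -/
noncomputable def ch {Atom : Type u} (M : Kripke Atom) (V : Set Atom) : ℕ :=
  letI := Classical.dec (∃ s s' k, dis M V s s' k)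
  if ∃ s s' k, dis M V s s' k then
    sSup {k | ∃ s s', dis M V s s' k}
  else
    sInf {k | (fun s s' : M.State => BRel Vᶜ k ⟨M, s⟩ ⟨M, s'⟩) =
              (fun s s' : M.State => BRel Vᶜ (k + 1) ⟨M, s⟩ ⟨M, s'⟩)}

/-- The characterizing formula `F_V(M,s0)` of an initial K-structure on `V`. -/
noncomputable def charForm {Atom : Type u} [Finite Atom] (M : InitKripke Atom) (V : Set Atom) :
    CTL Atom :=
  let T : M.State → CTL Atom := fun s => charTree M.toKripke V (ch M.toKripke V) s
  (T M.s0).and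
    (andList ((setToList (Set.univ : Set M.State)).map fun s =>
      CTL.AG ((T s).imp
        ((andList ((M.toKripke.succList s).map fun t => CTL.EX (T t))).and
          (CTL.AX (orList ((M.toKripke.succList s).map T)))))))

/-- `ψ` is a result of forgetting `V` from `φ`. -/
def IsForget {Atom : Type u} (φ : CTL Atom) (V : Set Atom) (ψ : CTL Atom) : Prop :=
  CTL.vars ψ ∩ V = ∅ ∧
  CTLMod ψ = {K : InitKripke Atom | ∃ K' ∈ CTLMod φ, VBisim V K'.toKS K.toKS}

/-!
A model `(N, t₀)` satisfies `charForm M V` iff `(M, s₀) ↔_{Vᶜ} (N, t₀)`; the theorem follows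
since `↔_{Vᶜ}` is an equivalence relation. Satisfying `charTree M V n s` at `t` means exactly
`B_n^{Vᶜ}` between `s` and `t`. On the finite structure `M` the relations `B_n` stabilize, and
`ch M V` is past every depth at which two non-bisimilar states of `M` separate, so
`B_{ch}` already implies bisimilarity between states of `M`. The `AG` conjunct says that `B_{ch}`
propagates to successors everywhere below `t₀`, i.e. that it is a bisimulation. Conversely, if
the models are bisimilar, every state `t` below `t₀` is bisimilar to some state of `M`, so a
`B_{ch}` pair `(s, t)` is in fact bisimilar and `B_{ch}` propagates from it.
-/

namespace BRel
variable {Atom : Type u} {V : Set Atom}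

theorem of_succ : ∀ {n : ℕ} {K1 K2 : KStruct Atom}, BRel V (n + 1) K1 K2 → BRel V n K1 K2
  | 0, _, _, h => h.1
  | _ + 1, _, _, ⟨h0, h1, h2⟩ =>
    ⟨h0, fun t r => (h1 t r).imp fun _ => And.imp_right of_succ,
      fun t r => (h2 t r).imp fun _ => And.imp_right of_succ⟩

theorem of_le {m n : ℕ} {K1 K2 : KStruct Atom} (hmn : m ≤ n) (h : BRel V n K1 K2) :
    BRel V m K1 K2 :=
  antitone_nat_of_succ_le (f := fun n => BRel V n K1 K2) (fun _ => of_succ) hmn h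

theorem label_eq {n : ℕ} {K1 K2 : KStruct Atom} (h : BRel V n K1 K2) :
    K1.M.L K1.s \ V = K2.M.L K2.s \ V :=
  h.of_le n.zero_le

theorem succ_iff {n : ℕ} {K1 K2 : KStruct Atom} (h : BRel V n K1 K2) :
    BRel V (n + 1) K1 K2 ↔
      (∀ t1, K1.M.R K1.s t1 → ∃ t2, K2.M.R K2.s t2 ∧ BRel V n ⟨K1.M, t1⟩ ⟨K2.M, t2⟩) ∧
      (∀ t2, K2.M.R K2.s t2 → ∃ t1, K1.M.R K1.s t1 ∧ BRel V n ⟨K1.M, t1⟩ ⟨K2.M, t2⟩) :=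
  and_iff_right h.label_eq

protected theorem symm : ∀ {n : ℕ} {K1 K2 : KStruct Atom}, BRel V n K1 K2 → BRel V n K2 K1
  | 0, _, _, h => Eq.symm h
  | _ + 1, _, _, ⟨h0, h1, h2⟩ =>
    ⟨h0.symm, fun t r => (h2 t r).imp fun _ => And.imp_right BRel.symm,
      fun t r => (h1 t r).imp fun _ => And.imp_right BRel.symm⟩

protected theorem trans : ∀ {n : ℕ} {K1 K2 K3 : KStruct Atom},
    BRel V n K1 K2 → BRel V n K2 K3 → BRel V n K1 K3
  | 0, _, _, _, h, g => Eq.trans h g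
  | _ + 1, _, _, _, ⟨h0, h1, h2⟩, ⟨g0, g1, g2⟩ =>
    ⟨h0.trans g0,
      fun t1 r1 =>
        let ⟨t2, r2, b⟩ := h1 t1 r1
        let ⟨t3, r3, b'⟩ := g1 t2 r2
        ⟨t3, r3, b.trans b'⟩,
      fun t3 r3 =>
        let ⟨t2, r2, b'⟩ := g2 t3 r3
        let ⟨t1, r1, b⟩ := h2 t2 r2
        ⟨t1, r1, b.trans b'⟩⟩

theorem iff_treeBisim {M1 M2 : Kripke Atom} (n : ℕ) (s1 : M1.State) (s2 : M2.State) :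
    BRel V n ⟨M1, s1⟩ ⟨M2, s2⟩ ↔ TreeBisim V M1 M2 n s1 s2 := by
  induction n generalizing s1 s2 with
  | zero => rfl
  | succ n ih => simp only [BRel, TreeBisim, ih]

end BRel

namespace VBisim
variable {Atom : Type u} {V : Set Atom} {K1 K2 K3 : KStruct Atom}

protected theorem symm (h : VBisim V K1 K2) : VBisim V K2 K1 := fun n => (h n).symm

protected theorem trans (h : VBisim V K1 K2) (h' : VBisim V K2 K3) : VBisim V K1 K3 :=
  fun n => (h n).trans (h' n)

theorem exists_succ (h : VBisim V K1 K2) {t1 : K1.M.State} (r : K1.M.R K1.s t1) :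
    ∃ t2, K2.M.R K2.s t2 ∧ VBisim V ⟨K1.M, t1⟩ ⟨K2.M, t2⟩ := by
  by_contra! hc
  simp only [VBisim, not_forall] at hc
  choose depth hdepth using hc
  -- `K2.s` has finitely many successors, so a single depth refutes all of them
  obtain ⟨b, hb⟩ := (Set.finite_range fun t : {t2 // K2.M.R K2.s t2} => depth t.1 t.2).bddAbove
  obtain ⟨t2, r2, hbr⟩ := (h (b + 1)).2.1 t1 r
  exact hdepth t2 r2 (hbr.of_le (hb ⟨⟨t2, r2⟩, rfl⟩))

theorem exists_of_reflTransGen {M1 M2 : Kripke Atom} {s0 : M1.State} {t0 t : M2.State}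
    (h : VBisim V ⟨M1, s0⟩ ⟨M2, t0⟩) (ht : Relation.ReflTransGen M2.R t0 t) :
    ∃ s, VBisim V ⟨M1, s⟩ ⟨M2, t⟩ := by
  induction ht with
  | refl => exact ⟨s0, h⟩
  | tail _ r ih =>
    obtain ⟨s, hs⟩ := ih
    obtain ⟨s', -, hs'⟩ := hs.symm.exists_succ r
    exact ⟨s', hs'.symm⟩

theorem of_bisimulation {M1 M2 : Kripke Atom} (Z : M1.State → M2.State → Prop)
    (hZ : ∀ s t, Z s t → M1.L s \ V = M2.L t \ V ∧
      (∀ s', M1.R s s' → ∃ t', M2.R t t' ∧ Z s' t') ∧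
      (∀ t', M2.R t t' → ∃ s', M1.R s s' ∧ Z s' t'))
    {s : M1.State} {t : M2.State} (h : Z s t) : VBisim V ⟨M1, s⟩ ⟨M2, t⟩ := by
  intro n
  induction n generalizing s t with
  | zero => exact (hZ s t h).1
  | succ n ih =>
    obtain ⟨hL, hforth, hback⟩ := hZ s t h
    exact ⟨hL, fun s' r => (hforth s' r).imp fun _ => And.imp_right ih,
      fun t' r => (hback t' r).imp fun _ => And.imp_right ih⟩

end VBisim

section CharacterizationNumber
variable {Atom : Type u}

theorem Kripke.exists_brel_imp_vbisim (M : Kripke Atom) (W : Set Atom) :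
    ∃ m, ∀ s s' : M.State, BRel W m ⟨M, s⟩ ⟨M, s'⟩ → VBisim W ⟨M, s⟩ ⟨M, s'⟩ := by
  obtain ⟨m, hm⟩ := WellFoundedLT.antitone_chain_condition
    (f := fun n (s s' : M.State) => BRel W n ⟨M, s⟩ ⟨M, s'⟩) fun _ _ hmn _ _ => BRel.of_le hmn
  refine ⟨m, fun s s' hb n => ?_⟩
  rcases le_total n m with hn | hn
  · exact hb.of_le hn
  · rwa [← congrFun₂ (hm n hn) s s']

variable {M : Kripke Atom} {V : Set Atom}

theorem exists_dis_of_not_vbisim {s s' : M.State} (h : ¬VBisim Vᶜ ⟨M, s⟩ ⟨M, s'⟩) :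
    ∃ k, dis M V s s' k := by
  have hne : {n | ¬TreeBisim Vᶜ M M n s s'}.Nonempty := by
    simpa [VBisim, BRel.iff_treeBisim, Set.Nonempty] using h
  exact ⟨_, h, Nat.sInf_mem hne, fun _ => Nat.sInf_le⟩

theorem dis_le_ch {s s' : M.State} {k : ℕ} (h : dis M V s s' k) : k ≤ ch M V := by
  obtain ⟨m, hm⟩ := M.exists_brel_imp_vbisim Vᶜ
  have hbdd : BddAbove {k | ∃ s s', dis M V s s' k} :=
    ⟨m, fun _ ⟨a, b, hab, hk⟩ => hk.2 fun ht => hab (hm a b ((BRel.iff_treeBisim m a b).2 ht))⟩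
  rw [ch, if_pos ⟨s, s', k, h⟩]
  exact le_csSup hbdd ⟨s, s', h⟩

theorem vbisim_of_brel_ch {s s' : M.State} (h : BRel Vᶜ (ch M V) ⟨M, s⟩ ⟨M, s'⟩) :
    VBisim Vᶜ ⟨M, s⟩ ⟨M, s'⟩ := by
  by_contra hns
  obtain ⟨k, hk⟩ := exists_dis_of_not_vbisim hns
  exact hk.2.1 ((BRel.iff_treeBisim k s s').1 (h.of_le (dis_le_ch hk)))

end CharacterizationNumber

section Semantics
variable {Atom : Type u} {N : Kripke Atom} {φ ψ : CTL Atom} {t : N.State}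

theorem sat_and : Sat N (φ.and ψ) t ↔ Sat N φ t ∧ Sat N ψ t := by
  simp only [CTL.and, Sat, not_or, not_not]

theorem sat_imp : Sat N (φ.imp ψ) t ↔ (Sat N φ t → Sat N ψ t) := by
  simp only [CTL.imp, Sat, imp_iff_not_or]

theorem sat_AX : Sat N φ.AX t ↔ ∀ t', N.R t t' → Sat N φ t' := by
  simp only [CTL.AX, Sat, not_exists, not_and, not_not]

theorem sat_andList (l : List (CTL Atom)) : Sat N (andList l) t ↔ ∀ φ ∈ l, Sat N φ t := by
  induction l with
  | nil => simp only [andList, Sat, List.not_mem_nil, IsEmpty.forall_iff, implies_true]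
  | cons φ l ih => simp only [andList, sat_and, ih, List.forall_mem_cons]

theorem sat_orList (l : List (CTL Atom)) : Sat N (orList l) t ↔ ∃ φ ∈ l, Sat N φ t := by
  induction l with
  | nil => simp only [orList, Sat, List.not_mem_nil, false_and, exists_false]
  | cons φ l ih => simp only [orList, Sat, ih, List.mem_cons, exists_eq_or_imp]

theorem Kripke.exists_path (t : N.State) :
    ∃ π : ℕ → N.State, π 0 = t ∧ ∀ n, N.R (π n) (π (n + 1)) := by
  choose next hnext using N.serial
  exact ⟨fun n => next^[n] t, rfl, fun n => by
    simpa only [Function.iterate_succ_apply'] using hnext _⟩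

theorem Kripke.exists_path_of_reflTransGen {t0 : N.State} (h : Relation.ReflTransGen N.R t0 t) :
    ∃ π : ℕ → N.State, π 0 = t0 ∧ (∀ n, N.R (π n) (π (n + 1))) ∧ ∃ i, π i = t := by
  induction h using Relation.ReflTransGen.head_induction_on with
  | refl =>
    obtain ⟨π, h0, hπ⟩ := N.exists_path t
    exact ⟨π, h0, hπ, 0, h0⟩
  | @head a _ r _ ih =>
    obtain ⟨π, h0, hπ, i, hi⟩ := ih
    refine ⟨fun n => n.casesOn a π, rfl, ?_, i + 1, hi⟩
    rintro (_ | n)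
    · show N.R a (π 0)
      exact h0 ▸ r
    · exact hπ n

theorem sat_AG {t0 : N.State} :
    Sat N φ.AG t0 ↔ ∀ t, Relation.ReflTransGen N.R t0 t → Sat N φ t := by
  simp only [CTL.AG, Sat]
  constructor
  · intro h t ht
    by_contra hφ
    obtain ⟨π, h0, hπ, i, rfl⟩ := N.exists_path_of_reflTransGen ht
    exact h ⟨π, h0, hπ, i, hφ, fun _ _ => trivial⟩
  · rintro h ⟨π, rfl, hπ, i, hφ, -⟩
    have reach (i : ℕ) : Relation.ReflTransGen N.R (π 0) (π i) := by
      induction i with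
      | zero => exact .refl
      | succ i ih => exact ih.tail (hπ i)
    exact hφ (h _ (reach i))

theorem mem_setToList {α : Type u} [Finite α] {S : Set α} {a : α} : a ∈ setToList S ↔ a ∈ S := by
  simp only [setToList, Finset.mem_toList, Set.Finite.mem_toFinset]

theorem Kripke.mem_succList {M : Kripke Atom} {s s' : M.State} : s' ∈ M.succList s ↔ M.R s s' :=
  mem_setToList

theorem sat_AX_orList_succList {M : Kripke Atom} (f : M.State → CTL Atom) (s : M.State) :
    Sat N (orList ((M.succList s).map f)).AX t ↔
      ∀ t', N.R t t' → ∃ s', M.R s s' ∧ Sat N (f s') t' := by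
  simp only [sat_AX, sat_orList, List.mem_map, Kripke.mem_succList, exists_exists_and_eq_and]

end Semantics

section CharTree
variable {Atom : Type u} [Finite Atom] {M N : Kripke Atom} {V : Set Atom}

theorem sat_charTree0 {s : M.State} {t : N.State} :
    Sat N (charTree0 M V s) t ↔ M.L s \ Vᶜ = N.L t \ Vᶜ := by
  simp only [charTree0, sat_and, sat_andList, List.forall_mem_map, mem_setToList, Sat,
    Set.mem_inter_iff, Set.mem_sdiff, Set.ext_iff, Set.mem_compl_iff, not_not]
  grind

theorem sat_charTree (n : ℕ) (s : M.State) (t : N.State) :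
    Sat N (charTree M V n s) t ↔ BRel Vᶜ n ⟨M, s⟩ ⟨N, t⟩ := by
  induction n generalizing s t with
  | zero => exact sat_charTree0
  | succ n ih =>
    simp only [charTree, BRel, sat_and, sat_andList, List.forall_mem_map, Kripke.mem_succList, Sat,
      sat_AX_orList_succList, ih, sat_charTree0]
    tauto

end CharTree

section CharForm
variable {Atom : Type u} [Finite Atom] (M : InitKripke Atom) (V : Set Atom) (N : Kripke Atom)
  (t0 : N.State)

theorem sat_charForm_iff_brel :
    Sat N (charForm M V) t0 ↔ BRel Vᶜ (ch M.toKripke V) M.toKS ⟨N, t0⟩ ∧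
      ∀ s t, Relation.ReflTransGen N.R t0 t →
        BRel Vᶜ (ch M.toKripke V) ⟨M.toKripke, s⟩ ⟨N, t⟩ →
        BRel Vᶜ (ch M.toKripke V + 1) ⟨M.toKripke, s⟩ ⟨N, t⟩ := by
  simp only [charForm, sat_and, sat_andList, List.forall_mem_map, mem_setToList, Set.mem_univ,
    true_implies, sat_AG, sat_imp, Kripke.mem_succList, Sat, sat_AX_orList_succList, sat_charTree]
  exact and_congr_right fun _ => forall_congr' fun s => forall₂_congr fun t _ =>
    forall_congr' fun hb => hb.succ_iff.symm

theorem sat_charForm_iff : Sat N (charForm M V) t0 ↔ VBisim Vᶜ M.toKS ⟨N, t0⟩ := by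
  rw [sat_charForm_iff_brel]
  set c := ch M.toKripke V
  constructor
  · rintro ⟨h0, hstep⟩
    refine VBisim.of_bisimulation (fun s t => Relation.ReflTransGen N.R t0 t ∧
      BRel Vᶜ c ⟨M.toKripke, s⟩ ⟨N, t⟩) (fun s t ⟨ht, hb⟩ => ?_) ⟨.refl, h0⟩
    obtain ⟨hL, hforth, hback⟩ := hstep s t ht hb
    exact ⟨hL, fun s' r => (hforth s' r).imp fun t' ⟨r', hb'⟩ => ⟨r', ht.tail r', hb'⟩,
      fun t' r' => (hback t' r').imp fun _ ⟨r, hb'⟩ => ⟨r, ht.tail r', hb'⟩⟩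
  · refine fun h => ⟨h c, fun s t ht hb => ?_⟩
    -- `t` is bisimilar to some `u`; then `s` and `u` agree up to depth `c`, hence are bisimilar
    obtain ⟨u, hu⟩ := h.exists_of_reflTransGen ht
    exact ((vbisim_of_brel_ch (hb.trans (hu c).symm)).trans hu) (c + 1)

end CharForm

/-- if `(M,s_0) ↔_{𝒜∖V} (M',s_0')` then `F_V(M,s_0) ≡ F_V(M',s_0')`. -/
theorem vbisim_charForm_equiv {Atom : Type u} [Finite Atom] (V : Set Atom)
    (M M' : InitKripke Atom) (h : VBisim Vᶜ M.toKS M'.toKS) :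
    CTLEquiv (charForm M V) (charForm M' V) := by
  ext N
  simp only [CTLMod, Set.mem_ofPred_eq, sat_charForm_iff]
  exact ⟨h.symm.trans, h.trans⟩
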